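/- Let x be s-sparse, ‖y - Ax‖₂ ≤ ε, x̃ ∈ ℝ^N arbitrary, T̂ = supp(x̃, s), and x̂ defined by x̂_{T̂} = A_{T̂}† y, x̂_{T̂^c} = 0. If δ_{2s} < 1, then the ℓ₁ bound ‖x - x̂‖₁ ≤ √(2s/(1-δ_{2s}²)) ‖x - x̃‖₁ + (√(2s(1+δ_s))/(1-δ_{2s})) ε holds. -/

import Mathlib

/-
Write `d = x - x̂`, split it as `u = d_{T̂}` plus `d_{T̂ᶜ} = x_{T̂ᶜ}`, and let `e = y - Ax`.
The normal equations say `⟨Au, Ax̂ - y⟩ = 0`, i.e. `⟨Au, Ad⟩ = -⟨Au, e⟩`, so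
`‖u‖² = ⟨u, d⟩ = ⟨u, (I - AᵀA) d⟩ - ⟨Au, e⟩ ≤ δ₂ₛ ‖u‖ ‖d‖ + √(1 + δₛ) ‖u‖ ε`,
the first bound being the near-orthogonality that the RIP gives on vectors supported on
`T̂ ∪ supp x` (at most `2s` indices). Together with `‖d‖² = ‖u‖² + ‖x_{T̂ᶜ}‖²` this quadratic
inequality in `‖d‖` yields `‖d‖₂ ≤ ‖x_{T̂ᶜ}‖₂ / √(1 - δ₂ₛ²) + √(1 + δₛ) ε / (1 - δ₂ₛ)`.
Finally `‖d‖₁ ≤ √(2s) ‖d‖₂`, `‖x_{T̂ᶜ}‖₂ ≤ ‖x_{T̂ᶜ}‖₁`, and `‖x_{T̂ᶜ}‖₁ ≤ ‖x - x̃‖₁` because the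
`s` entries of `x̃` of largest magnitude dominate those it misses on `supp x`.
-/

open Finset

/-- ℓ2 norm of a vector. -/
noncomputable def l2 {n : ℕ} (v : Fin n → ℝ) : ℝ := Real.sqrt (∑ i, v i ^ 2)

/-- ℓ1 norm of a vector. -/
noncomputable def l1 {n : ℕ} (v : Fin n → ℝ) : ℝ := ∑ i, |v i|

/-- number of nonzero entries (ℓ0 "norm"). -/
noncomputable def spars {n : ℕ} (v : Fin n → ℝ) : ℕ := Set.ncard {i | v i ≠ 0}

/-- restriction of a vector to an index set (zero off the set). -/
def restr {n : ℕ} (S : Finset (Fin n)) (v : Fin n → ℝ) : Fin n → ℝ :=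
  fun i => if i ∈ S then v i else 0

open Matrix

def IsRIP {m n : ℕ} (A : Matrix (Fin m) (Fin n) ℝ) (k : ℕ) (δ : ℝ) : Prop :=
  ∀ v : Fin n → ℝ, spars v ≤ k →
    (1 - δ) * (l2 v) ^ 2 ≤ (l2 (A.mulVec v)) ^ 2 ∧ (l2 (A.mulVec v)) ^ 2 ≤ (1 + δ) * (l2 v) ^ 2

lemma sum_le_sum_of_card_le_of_forall_le {ι M : Type*} [AddCommMonoid M] [LinearOrder M]
    [IsOrderedAddMonoid M] {P Q : Finset ι} {f : ι → M}
    (hf : ∀ i ∈ Q, 0 ≤ f i) (hcard : P.card ≤ Q.card) (hle : ∀ i ∈ Q, ∀ j ∈ P, f j ≤ f i) :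
    ∑ j ∈ P, f j ≤ ∑ i ∈ Q, f i := by
  rcases Q.eq_empty_or_nonempty with rfl | hQ
  · simp [Finset.card_eq_zero.mp (Nat.le_zero.mp hcard)]
  obtain ⟨i₀, hi₀, hmin⟩ := Q.exists_min_image f hQ
  calc ∑ j ∈ P, f j ≤ P.card • f i₀ := P.sum_le_card_nsmul f _ fun j hj => hle i₀ hi₀ j hj
    _ ≤ Q.card • f i₀ := nsmul_le_nsmul_left (hf i₀ hi₀) hcard
    _ ≤ ∑ i ∈ Q, f i := Q.card_nsmul_le_sum f _ hmin

/-- `D` lies below the larger root of `(1 - δ²) D² - 2 δ η D - (η² + V²)`, which is at most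
`V / √(1 - δ²) + η / (1 - δ)`. -/
lemma le_div_sqrt_one_sub_sq_add_div {δ η D U V : ℝ} (hδ0 : 0 ≤ δ) (hδ1 : δ < 1) (hη : 0 ≤ η)
    (hU : 0 ≤ U) (hV : 0 ≤ V) (hD : D ^ 2 = U ^ 2 + V ^ 2) (hUD : U ≤ δ * D + η) :
    D ≤ V / √(1 - δ ^ 2) + η / (1 - δ) := by
  have hr : 0 < √(1 - δ ^ 2) := Real.sqrt_pos.mpr (by nlinarith)
  set r := √(1 - δ ^ 2)
  have hr2 : r ^ 2 = 1 - δ ^ 2 := Real.sq_sqrt (by nlinarith)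
  obtain ⟨a, ha, rfl⟩ : ∃ a, 0 ≤ a ∧ V = r * a := ⟨V / r, by positivity, by field_simp⟩
  have hδ1' : 0 < 1 - δ := sub_pos.mpr hδ1
  obtain ⟨b, hb, rfl⟩ : ∃ b, 0 ≤ b ∧ η = (1 - δ) * b :=
    ⟨η / (1 - δ), div_nonneg hη hδ1'.le, by field_simp⟩
  rw [mul_div_cancel_left₀ _ hr.ne', mul_div_cancel_left₀ _ hδ1'.ne']
  by_contra! hlt
  have hq :
      (1 - δ) * ((1 + δ) * D ^ 2 - 2 * δ * b * D - (1 - δ) * b ^ 2 - (1 + δ) * a ^ 2) ≤ 0 := by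
    have hUD' : U ^ 2 ≤ (δ * D + (1 - δ) * b) ^ 2 := pow_le_pow_left₀ hU hUD 2
    have hra : (r * a) ^ 2 = (1 - δ ^ 2) * a ^ 2 := by rw [mul_pow, hr2]
    nlinarith
  have hq' : (1 + δ) * D ^ 2 - 2 * δ * b * D - (1 - δ) * b ^ 2 - (1 + δ) * a ^ 2 ≤ 0 :=
    nonpos_of_mul_nonpos_right hq hδ1'
  have hgrowth : 0 < (D - (a + b)) * ((1 + δ) * (D + (a + b)) - 2 * δ * b) :=
    mul_pos (by linarith) (by nlinarith)
  nlinarith [mul_nonneg ha hb]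

lemma mulVec_dotProduct_eq_zero_of_normal_equations {ι κ R : Type*} [Fintype ι] [Fintype κ]
    [CommSemiring R] {A : Matrix ι κ R} {T : Finset κ} {w : κ → R} {r : ι → R}
    (hw : ∀ i ∉ T, w i = 0) (hr : ∀ i ∈ T, ∑ j, A j i * r j = 0) : (A *ᵥ w) ⬝ᵥ r = 0 := by
  rw [dotProduct_comm, dotProduct_mulVec]
  refine Finset.sum_eq_zero fun i _ => ?_
  by_cases hi : i ∈ T
  · simp [vecMul, dotProduct, mul_comm (r _), hr i hi]
  · simp [hw i hi]

section Vectors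

variable {n : ℕ}

lemma l2_nonneg (v : Fin n → ℝ) : 0 ≤ l2 v := Real.sqrt_nonneg _

lemma l2_sq (v : Fin n → ℝ) : l2 v ^ 2 = ∑ i, v i ^ 2 := Real.sq_sqrt (by positivity)

lemma l2_sq_eq_dotProduct (v : Fin n → ℝ) : l2 v ^ 2 = v ⬝ᵥ v := by
  rw [l2_sq]
  simp only [dotProduct, sq]

lemma l2_zero : l2 (0 : Fin n → ℝ) = 0 := by simp [l2]

lemma l2_neg (v : Fin n → ℝ) : l2 (-v) = l2 v := by simp [l2]

lemma l2_sq_pos {v : Fin n → ℝ} (hv : v ≠ 0) : 0 < l2 v ^ 2 := by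
  obtain ⟨i, hi⟩ := Function.ne_iff.mp hv
  rw [l2_sq]
  exact Finset.sum_pos' (fun j _ => sq_nonneg (v j))
    ⟨i, Finset.mem_univ i, pow_two_pos_of_ne_zero hi⟩

lemma l2_sq_smul_add (t : ℝ) (w z : Fin n → ℝ) :
    l2 (t • w + z) ^ 2 = t ^ 2 * l2 w ^ 2 + 2 * t * (w ⬝ᵥ z) + l2 z ^ 2 := by
  simp only [l2_sq_eq_dotProduct, add_dotProduct, dotProduct_add, smul_dotProduct,
    dotProduct_smul, dotProduct_comm z w, smul_eq_mul]
  ring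

lemma dotProduct_le_l2_mul_l2 (v w : Fin n → ℝ) : v ⬝ᵥ w ≤ l2 v * l2 w :=
  Real.sum_mul_le_sqrt_mul_sqrt _ v w

lemma l1_nonneg (v : Fin n → ℝ) : 0 ≤ l1 v := Finset.sum_nonneg fun _ _ => abs_nonneg _

lemma l2_le_l1 (v : Fin n → ℝ) : l2 v ≤ l1 v := by
  refine Real.sqrt_le_iff.mpr ⟨l1_nonneg v, ?_⟩
  rw [l1]
  simpa only [sq_abs] using Finset.sum_sq_le_sq_sum_of_nonneg fun i _ => abs_nonneg (v i)

lemma l1_restr (S : Finset (Fin n)) (v : Fin n → ℝ) : l1 (restr S v) = ∑ i ∈ S, |v i| := by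
  simp [l1, restr, apply_ite, Finset.sum_ite_mem]

lemma l2_sq_restr_add_l2_sq_restr_compl (S : Finset (Fin n)) (v : Fin n → ℝ) :
    l2 (restr S v) ^ 2 + l2 (restr Sᶜ v) ^ 2 = l2 v ^ 2 := by
  simp only [l2_sq, ← Finset.sum_add_distrib]
  refine Finset.sum_congr rfl fun i _ => ?_
  by_cases hi : i ∈ S <;> simp [restr, hi]

lemma restr_dotProduct_self (S : Finset (Fin n)) (v : Fin n → ℝ) :
    restr S v ⬝ᵥ v = l2 (restr S v) ^ 2 := by
  rw [l2_sq_eq_dotProduct]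
  refine Finset.sum_congr rfl fun i _ => ?_
  by_cases hi : i ∈ S <;> simp [restr, hi]

lemma spars_eq_card_filter (v : Fin n → ℝ) :
    spars v = (Finset.univ.filter fun i => v i ≠ 0).card := by
  rw [spars, ← Set.ncard_coe_finset, Finset.coe_filter]
  simp

lemma spars_le_card_of_support_subset {v : Fin n → ℝ} {S : Finset (Fin n)}
    (h : ∀ i ∉ S, v i = 0) : spars v ≤ S.card := by
  rw [spars, ← Set.ncard_coe_finset]
  exact Set.ncard_le_ncard (fun i hi => by_contra fun hiS => hi (h i hiS)) (Finset.finite_toSet S)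

lemma spars_le_card_add_spars {v x : Fin n → ℝ} {T : Finset (Fin n)}
    (h : ∀ i ∉ T, x i = 0 → v i = 0) : spars v ≤ T.card + spars x := by
  rw [spars_eq_card_filter x]
  refine (spars_le_card_of_support_subset fun i hi => ?_).trans (Finset.card_union_le _ _)
  simp only [Finset.mem_union, Finset.mem_filter, Finset.mem_univ, true_and, not_or,
    not_not] at hi
  exact h i hi.1 hi.2

lemma l1_le_sqrt_mul_l2 {v : Fin n → ℝ} {k : ℕ} (hv : spars v ≤ k) : l1 v ≤ √k * l2 v := by
  set S := Finset.univ.filter fun i => v i ≠ 0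
  have hS : ∀ i ∉ S, v i = 0 := by simp [S]
  calc l1 v = ∑ i ∈ S, |v i| * 1 := by
        rw [l1, ← Finset.sum_subset S.subset_univ fun i _ hi => by simp [hS i hi]]
        simp
    _ ≤ √(∑ i ∈ S, |v i| ^ 2) * √(∑ i ∈ S, 1 ^ 2) := Real.sum_mul_le_sqrt_mul_sqrt _ _ _
    _ = l2 v * √S.card := by
        rw [l2, Finset.sum_subset S.subset_univ fun i _ hi => by simp [hS i hi]]
        simp
    _ ≤ √k * l2 v := by
        rw [mul_comm]
        refine mul_le_mul_of_nonneg_right (Real.sqrt_le_sqrt ?_) (l2_nonneg v)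
        exact_mod_cast spars_eq_card_filter v ▸ hv

lemma l1_restr_compl_le_l1_sub {x xt : Fin n → ℝ} {T : Finset (Fin n)} (hx : spars x ≤ T.card)
    (hT : ∀ i ∈ T, ∀ j ∉ T, |xt j| ≤ |xt i|) : l1 (restr Tᶜ x) ≤ l1 (x - xt) := by
  set S := Finset.univ.filter fun i => x i ≠ 0
  have hS : ∀ i ∉ S, x i = 0 := by simp [S]
  have hcard : (S \ T).card ≤ (T \ S).card :=
    Finset.card_sdiff_le_card_sdiff_iff.mpr (spars_eq_card_filter x ▸ hx)
  have hdisj : Disjoint (S \ T) (T \ S) := disjoint_sdiff_sdiff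
  calc l1 (restr Tᶜ x) = ∑ i ∈ S \ T, |x i| := by
        rw [l1_restr, Finset.sdiff_eq_inter_compl, Finset.inter_comm]
        exact (Finset.sum_subset Finset.inter_subset_left fun i hi hiS => by
          simp [hS i fun h => hiS (Finset.mem_inter.mpr ⟨hi, h⟩)]).symm
    _ ≤ ∑ i ∈ S \ T, (|x i - xt i| + |xt i|) :=
        Finset.sum_le_sum fun i _ => by linarith [abs_sub_abs_le_abs_sub (x i) (xt i)]
    _ ≤ ∑ i ∈ S \ T, |x i - xt i| + ∑ j ∈ T \ S, |xt j| := by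
        rw [Finset.sum_add_distrib]
        refine add_le_add le_rfl
          (sum_le_sum_of_card_le_of_forall_le (fun _ _ => abs_nonneg _) hcard
            fun i hi j hj => hT i (Finset.mem_sdiff.mp hi).1 j (Finset.mem_sdiff.mp hj).2)
    _ = ∑ i ∈ S \ T ∪ T \ S, |(x - xt) i| := by
        rw [Finset.sum_union hdisj]
        congr 1
        refine Finset.sum_congr rfl fun j hj => ?_
        simp [hS j (Finset.mem_sdiff.mp hj).2]
    _ ≤ l1 (x - xt) :=
        Finset.sum_le_sum_of_subset_of_nonneg (Finset.subset_univ _) fun _ _ _ => abs_nonneg _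

end Vectors

section RIP

variable {m n k : ℕ} {A : Matrix (Fin m) (Fin n) ℝ} {δ : ℝ}

lemma IsRIP.nonneg (hA : IsRIP A k δ) {v : Fin n → ℝ} (hv : spars v ≤ k) (hv0 : v ≠ 0) :
    0 ≤ δ := by
  obtain ⟨hlow, hup⟩ := hA v hv
  nlinarith [l2_sq_pos hv0]

lemma IsRIP.l2_mulVec_le (hA : IsRIP A k δ) {v : Fin n → ℝ} (hv : spars v ≤ k) :
    l2 (A *ᵥ v) ≤ √(1 + δ) * l2 v := by
  rw [← Real.sqrt_sq (l2_nonneg (A *ᵥ v)), ← Real.sqrt_sq (l2_nonneg v),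
    ← Real.sqrt_mul' _ (sq_nonneg _)]
  exact Real.sqrt_le_sqrt (hA v hv).2

lemma IsRIP.dotProduct_sub_le (hA : IsRIP A k δ) (hδ : 0 ≤ δ) {S : Finset (Fin n)}
    (hS : S.card ≤ k) {w z : Fin n → ℝ} (hw : ∀ i ∉ S, w i = 0) (hz : ∀ i ∉ S, z i = 0) :
    w ⬝ᵥ z - (A *ᵥ w) ⬝ᵥ (A *ᵥ z) ≤ δ * l2 w * l2 z := by
  have hRIP : ∀ t : ℝ, (1 - δ) * l2 (t • w + z) ^ 2 ≤ l2 (A *ᵥ (t • w + z)) ^ 2 ∧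
      l2 (A *ᵥ (t • w + z)) ^ 2 ≤ (1 + δ) * l2 (t • w + z) ^ 2 := fun t =>
    hA _ ((spars_le_card_of_support_subset fun i hi => by simp [hw i hi, hz i hi]).trans hS)
  have hquad : ∀ t : ℝ, 0 ≤ δ * l2 w ^ 2 * (t * t) + 2 * (w ⬝ᵥ z - (A *ᵥ w) ⬝ᵥ (A *ᵥ z)) * t +
      δ * l2 z ^ 2 := fun t => by
    have hup := (hRIP t).2
    have hlow := (hRIP (-t)).1
    simp only [mulVec_add, mulVec_smul, l2_sq_smul_add] at hup hlow
    nlinarith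
  have hdiscrim := discrim_le_zero hquad
  rw [discrim] at hdiscrim
  refine (le_abs_self _).trans
    (abs_le_of_sq_le_sq ?_ (mul_nonneg (mul_nonneg hδ (l2_nonneg w)) (l2_nonneg z)))
  nlinarith

end RIP

theorem l2_sub_le_of_normal_equations {m n k : ℕ} {A : Matrix (Fin m) (Fin n) ℝ}
    {T : Finset (Fin n)} {x xh : Fin n → ℝ} {y : Fin m → ℝ} {ε δ δ' : ℝ}
    (hk : T.card + spars x ≤ k) (hy : l2 (y - A *ᵥ x) ≤ ε) (hsupp : ∀ i ∉ T, xh i = 0)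
    (hls : ∀ i ∈ T, ∑ j, A j i * ((A *ᵥ xh) j - y j) = 0) (hδ : δ < 1)
    (hA : IsRIP A k δ) (hA' : IsRIP A T.card δ') :
    l2 (x - xh) ≤ l2 (restr Tᶜ x) / √(1 - δ ^ 2) + √(1 + δ') / (1 - δ) * ε := by
  set d := x - xh
  set u := restr T d
  have hε : 0 ≤ ε := (l2_nonneg _).trans hy
  have hδ1 : 0 < 1 - δ := sub_pos.mpr hδ
  set S := T ∪ Finset.univ.filter fun i => x i ≠ 0
  have hS : S.card ≤ k := (Finset.card_union_le _ _).trans (spars_eq_card_filter x ▸ hk)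
  have hdS : ∀ i ∉ S, d i = 0 := fun i hi => by
    simp only [S, Finset.mem_union, Finset.mem_filter, Finset.mem_univ, true_and, not_or,
      not_not] at hi
    simp [d, hsupp i hi.1, hi.2]
  have huS : ∀ i ∉ S, u i = 0 := fun i hi => by simp [u, restr, hdS i hi]
  have hcompl : restr Tᶜ d = restr Tᶜ x := funext fun i => by
    by_cases hi : i ∈ T <;> simp [restr, d, hi, hsupp]
  rcases eq_or_ne d 0 with hd0 | hd0
  · rw [hd0, l2_zero]
    exact add_nonneg (div_nonneg (l2_nonneg _) (Real.sqrt_nonneg _))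
      (mul_nonneg (div_nonneg (Real.sqrt_nonneg _) hδ1.le) hε)
  have hδ0 : 0 ≤ δ := hA.nonneg ((spars_le_card_of_support_subset hdS).trans hS) hd0
  have hnormal : (A *ᵥ u) ⬝ᵥ (A *ᵥ d) = (A *ᵥ u) ⬝ᵥ -(y - A *ᵥ x) := by
    have hAd : A *ᵥ d = -(y - A *ᵥ x) - (A *ᵥ xh - y) := by simp only [d, mulVec_sub]; abel
    rw [hAd, dotProduct_sub, mulVec_dotProduct_eq_zero_of_normal_equations (r := A *ᵥ xh - y)
      (fun i hi => by simp [u, restr, hi]) hls, sub_zero]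
  have hu : l2 u ≤ δ * l2 d + √(1 + δ') * ε := by
    have hnoise := (dotProduct_le_l2_mul_l2 (A *ᵥ u) (-(y - A *ᵥ x))).trans
      (mul_le_mul (hA'.l2_mulVec_le (spars_le_card_of_support_subset
        fun i hi => by simp [u, restr, hi])) ((l2_neg _).le.trans hy) (l2_nonneg _)
        (mul_nonneg (Real.sqrt_nonneg _) (l2_nonneg _)))
    have horth := hA.dotProduct_sub_le hδ0 hS huS hdS
    have hsq : l2 u ^ 2 ≤ (δ * l2 d + √(1 + δ') * ε) * l2 u := by
      rw [← restr_dotProduct_self]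
      nlinarith
    nlinarith [l2_nonneg u, mul_nonneg hδ0 (l2_nonneg d),
      mul_nonneg (Real.sqrt_nonneg (1 + δ')) hε]
  have hpyth := l2_sq_restr_add_l2_sq_restr_compl T d
  rw [hcompl] at hpyth
  simpa [mul_div_right_comm] using le_div_sqrt_one_sub_sq_add_div hδ0 hδ
    (by positivity) (l2_nonneg u) (l2_nonneg _) hpyth.symm hu

theorem stmt16 {M N : ℕ} (A : Matrix (Fin M) (Fin N) ℝ)
    (s : ℕ) (x : Fin N → ℝ) (hx : spars x ≤ s)
    (y : Fin M → ℝ) (ε : ℝ) (hy : l2 (y - A.mulVec x) ≤ ε)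
    (xt : Fin N → ℝ)
    (Th : Finset (Fin N)) (hThcard : Th.card = s)
    (hTh : ∀ i ∈ Th, ∀ j ∉ Th, |xt j| ≤ |xt i|)   -- T̂ = indices of the s largest magnitudes of x̃
    (xh : Fin N → ℝ)
    -- x̂ is supported on T̂ and x̂_{T̂} = A_{T̂}† y, characterized by the normal equations
    (hxhsupp : ∀ i ∉ Th, xh i = 0)
    (hxhls : ∀ i ∈ Th, ∑ j, A j i * (A.mulVec xh j - y j) = 0)
    (δ2s δs : ℝ) (hδ2s : δ2s < 1)
    (hRIP2s : ∀ v : Fin N → ℝ, spars v ≤ 2 * s →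
      (1 - δ2s) * (l2 v) ^ 2 ≤ (l2 (A.mulVec v)) ^ 2 ∧
      (l2 (A.mulVec v)) ^ 2 ≤ (1 + δ2s) * (l2 v) ^ 2)
    (hRIPs : ∀ v : Fin N → ℝ, spars v ≤ s →
      (1 - δs) * (l2 v) ^ 2 ≤ (l2 (A.mulVec v)) ^ 2 ∧
      (l2 (A.mulVec v)) ^ 2 ≤ (1 + δs) * (l2 v) ^ 2) :
    l1 (x - xh) ≤ Real.sqrt (2 * s / (1 - δ2s ^ 2)) * l1 (x - xt) + (Real.sqrt (2 * s * (1 + δs)) / (1 - δ2s)) * ε := by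
  have hsparse : spars (x - xh) ≤ Th.card + spars x :=
    spars_le_card_add_spars fun i hi hxi => by simp [hxi, hxhsupp i hi]
  have hl2 := l2_sub_le_of_normal_equations (by omega) hy hxhsupp hxhls hδ2s hRIP2s
    (hThcard ▸ hRIPs : IsRIP A Th.card δs)
  have hprune : l2 (restr Thᶜ x) ≤ l1 (x - xt) :=
    (l2_le_l1 _).trans (l1_restr_compl_le_l1_sub (hThcard ▸ hx) hTh)
  calc l1 (x - xh) ≤ √(2 * s : ℕ) * l2 (x - xh) := l1_le_sqrt_mul_l2 (hsparse.trans (by omega))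
    _ ≤ √(2 * s : ℕ) * (l1 (x - xt) / √(1 - δ2s ^ 2) + √(1 + δs) / (1 - δ2s) * ε) := by
        gcongr
        exact hl2.trans (by gcongr)
    _ = _ := by
        push_cast
        have h2s : (0 : ℝ) ≤ 2 * s := by positivity
        rw [Real.sqrt_div h2s, Real.sqrt_mul h2s]
        ring
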